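/- arXiv:2101.03546 — 2 statements merged into one kernel-verified Lean document; each statement's English description precedes it below -/
import Mathlib

section
/- Let T ⊆ E be a tree subgraph of a finite simple graph G = (V, E), let {v, w} ∈ T, let k ∈ V(T) be distinct from v and w, and suppose {w, k} ∈ E. If k and v are connected in the subgraph with edge set T ∖ {{v, w}}, then T' := (T ∖ {{v, w}}) ∪ {{w, k}} is a tree subgraph with V(T') = V(T). -/
variable {V : Type*} [Fintype V] [DecidableEq V]

/-- The set of endpoints of the edges of an edge set `T` (the vertices "visited" by `T`). -/
def edgeVerts (T : Finset (Sym2 V)) : Finset V :=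
  Finset.univ.filter (fun v => ∃ e ∈ T, v ∈ e)

/-- Two vertices are connected in an edge set `T` if there is a path between them
using only edges of `T`. -/
def ConnIn (T : Finset (Sym2 V)) (u w : V) : Prop :=
  (SimpleGraph.fromEdgeSet (↑T : Set (Sym2 V))).Reachable u w

/-- A tree subgraph of `G` is a nonempty edge set `T ⊆ E(G)` whose induced subgraph is
connected and acyclic. -/
def IsTreeSubgraph (G : SimpleGraph V) (T : Finset (Sym2 V)) : Prop :=
  (↑T : Set (Sym2 V)) ⊆ G.edgeSet ∧ T.Nonempty ∧
  (∀ u ∈ edgeVerts T, ∀ w ∈ edgeVerts T, ConnIn T u w) ∧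
  (SimpleGraph.fromEdgeSet (↑T : Set (Sym2 V))).IsAcyclic

/-!
Removing `vw` splits the tree `T` into two components, with `v` and `k` in one and `w` in the
other, so the new edge `wk` joins the two components again: the result is acyclic because
`w` and `k` were not connected, and connected because `v` and `w` are joined through `k`.
The vertex set is unchanged: `v` and `k`, being connected in `T ∖ vw`, are endpoints of its edges.
-/

open SimpleGraph Finset

section

variable {α : Type*}

lemma SimpleGraph.Reachable.of_sup_edge {H H' : SimpleGraph α} {u v a b : α}
    (h : (H ⊔ edge u v).Reachable a b) (hle : H ≤ H') (huv : H'.Reachable u v) :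
    H'.Reachable a b := by
  obtain ⟨p⟩ := h
  induction p with
  | nil => rfl
  | cons hxy _ ih =>
    refine Reachable.trans ?_ ih
    rcases hxy with hxy | hxy
    · exact (hle hxy).reachable
    · obtain ⟨⟨rfl, rfl⟩ | ⟨rfl, rfl⟩, -⟩ := (edge_adj ..).1 hxy
      exacts [huv, huv.symm]

variable [DecidableEq α]

lemma fromEdgeSet_insert (S : Finset (Sym2 α)) (x y : α) :
    fromEdgeSet (↑(insert s(x, y) S) : Set (Sym2 α)) = fromEdgeSet ↑S ⊔ edge x y := by
  rw [coe_insert, Set.insert_eq, fromEdgeSet_union, sup_comm]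
  rfl

lemma not_connIn_erase_of_isAcyclic {T : Finset (Sym2 α)}
    (hT : (fromEdgeSet (↑T : Set (Sym2 α))).IsAcyclic) {a b : α} (h : s(a, b) ∈ T)
    (hab : a ≠ b) : ¬ ConnIn (T.erase s(a, b)) a b := by
  rw [← insert_erase h, fromEdgeSet_insert, isAcyclic_sup_fromEdgeSet_iff] at hT
  intro hr
  rcases hT.2 hr with rfl | hadj
  · exact hab rfl
  · exact notMem_erase _ _ ((fromEdgeSet_adj _).1 hadj).1

end

lemma edgeVerts_insert (S : Finset (Sym2 V)) (x y : V) :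
    edgeVerts (insert s(x, y) S) = insert x (insert y (edgeVerts S)) := by
  ext u
  simp [edgeVerts, or_assoc, eq_comm]

lemma mem_edgeVerts_of_connIn {S : Finset (Sym2 V)} {a b : V} (h : ConnIn S a b)
    (hab : a ≠ b) : a ∈ edgeVerts S := by
  obtain ⟨p⟩ := h
  cases p with
  | nil => exact absurd rfl hab
  | cons h _ =>
    rw [fromEdgeSet_adj] at h
    simpa [edgeVerts] using ⟨_, h.1, Sym2.mem_mk_left _ _⟩

theorem tree_swap_edge_is_tree_general
    (G : SimpleGraph V) (T : Finset (Sym2 V)) (hT : IsTreeSubgraph G T)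
    (v w k : V) (hvw : s(v, w) ∈ T)
    (hkv : k ≠ v)
    (hwkE : s(w, k) ∈ G.edgeSet)
    (hreach : ConnIn (T.erase s(v, w)) k v) :
    IsTreeSubgraph G (insert s(w, k) (T.erase s(v, w))) ∧
      edgeVerts (insert s(w, k) (T.erase s(v, w))) = edgeVerts T := by
  obtain ⟨hTE, -, hTconn, hTac⟩ := hT
  set S := T.erase s(v, w)
  have hTS : T = insert s(v, w) S := (insert_erase hvw).symm
  have hSvw : ¬ ConnIn S v w := not_connIn_erase_of_isAcyclic hTac hvw (G.ne_of_adj (hTE hvw))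
  have hverts : edgeVerts (insert s(w, k) S) = edgeVerts T := by
    have hv := mem_edgeVerts_of_connIn (Reachable.symm hreach) hkv.symm
    have hk := mem_edgeVerts_of_connIn hreach hkv
    rw [hTS, edgeVerts_insert, edgeVerts_insert, insert_eq_of_mem hk, Finset.insert_comm,
      insert_eq_of_mem hv]
  refine ⟨⟨?_, insert_nonempty _ _, ?_, ?_⟩, hverts⟩
  · rw [coe_insert, Set.insert_subset_iff]
    exact ⟨hwkE, (coe_subset.2 (erase_subset _ _)).trans hTE⟩
  · rw [hverts]
    intro u hu u' hu'
    have huu' : ConnIn T u u' := hTconn u hu u' hu'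
    rw [ConnIn, hTS, fromEdgeSet_insert] at huu'
    rw [ConnIn, fromEdgeSet_insert]
    have hwk : (edge w k).Adj w k := (edge_adj ..).2 ⟨Or.inl ⟨rfl, rfl⟩, G.ne_of_adj hwkE⟩
    have hvw' : (fromEdgeSet ↑S ⊔ edge w k).Reachable v w :=
      (hreach.mono le_sup_left).symm.trans (Adj.reachable (Or.inr hwk)).symm
    exact huu'.of_sup_edge le_sup_left hvw'
  · rw [fromEdgeSet_insert, isAcyclic_sup_fromEdgeSet_iff]
    exact ⟨hTac.anti (fromEdgeSet_mono (coe_subset.2 (erase_subset _ _))),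
      fun hSwk => absurd (Reachable.symm (hSwk.trans hreach)) hSvw⟩

/-- If {v, w} ∈ T, k ∈ V(T) is distinct from v and w, {w, k} ∈ E, and k is connected to v
in T ∖ {{v, w}}, then T'\'' = (T ∖ {{v, w}}) ∪ {{w, k}} is a tree subgraph with V(T'\'') = V(T). -/
theorem tree_swap_edge_is_tree
    (G : SimpleGraph V) (T : Finset (Sym2 V)) (hT : IsTreeSubgraph G T)
    (v w k : V) (hvw : s(v, w) ∈ T)
    (hk : k ∈ edgeVerts T) (hkv : k ≠ v) (hkw : k ≠ w)
    (hwkE : s(w, k) ∈ G.edgeSet)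
    (hreach : ConnIn (T.erase s(v, w)) k v) :
    IsTreeSubgraph G (insert s(w, k) (T.erase s(v, w))) ∧
      edgeVerts (insert s(w, k) (T.erase s(v, w))) = edgeVerts T :=
  tree_swap_edge_is_tree_general G T hT v w k hvw hkv hwkE hreach
end

section
/- (Proposition 1, tree BPCCSP.) Let T ⊆ E be an optimal tree for the tree BPCCSP and let v, w, k ∈ V(T) be three distinct visited vertices such that the three edges {v, w}, {v, k}, {w, k} all belong to E and {v, w} is at least as expensive as each of the other two, i.e., ℓ({v, w}) ≥ ℓ({v, k}) and ℓ({v, w}) ≥ ℓ({w, k}). Then either {v, w} ∉ T, or there exists another optimal tree T' such that {v, w} ∉ T' and T ∖ {{v, w}, {v, k}, {w, k}} = T' ∖ {{v, w}, {v, k}, {w, k}}. -/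
variable {V : Type*} [Fintype V] [DecidableEq V]

/-- An instance of a budgeted prize-collecting covering subgraph problem: a finite simple
graph with a depot, nonnegative edge costs, a positive budget, nonnegative vertex prizes,
neighbourhoods, nonnegative coverage prizes, and coverage capacities. -/
structure BPCCSPInstance (V : Type*) [Fintype V] [DecidableEq V] where
  G : SimpleGraph V
  depot : V
  len : Sym2 V → ℝ
  len_nonneg : ∀ e ∈ G.edgeSet, 0 ≤ len e
  budget : ℝ
  budget_pos : 0 < budget
  prize : V → ℝ
  prize_nonneg : ∀ v, 0 ≤ prize v
  nbhd : V → Finset V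
  nbhd_not_self : ∀ v, v ∉ nbhd v
  covPrize : V → V → ℝ
  covPrize_nonneg : ∀ v w, 0 ≤ covPrize v w
  cap : V → ℕ

/-- A coverage assignment for a visited set `S`: a partial map `σ` from `V ∖ S` to `S`
such that `σ v ∈ N_v ∩ S` whenever defined, and every `w ∈ S` has at most `c_w` preimages. -/
def IsCoverAssign (I : BPCCSPInstance V) (S : Finset V) (σ : V → Option V) : Prop :=
  (∀ v w, σ v = some w → v ∉ S ∧ w ∈ S ∧ w ∈ I.nbhd v) ∧
  (∀ w ∈ S, (Finset.univ.filter (fun v => σ v = some w)).card ≤ I.cap w)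

/-- The value of a coverage assignment: the sum of `q_{v, σ(v)}` over all `v` where `σ` is
defined. -/
def assignValue (I : BPCCSPInstance V) (σ : V → Option V) : ℝ :=
  ∑ v, Option.elim (σ v) 0 (fun w => I.covPrize v w)

/-- The collected prize of a visited set `S`: the sum of the prizes of the vertices of
`S ∖ {depot}` plus the maximum value of a coverage assignment for `S`. -/
noncomputable def collectedPrize (I : BPCCSPInstance V) (S : Finset V) : ℝ :=
  (∑ v ∈ S.erase I.depot, I.prize v) +
    sSup {x : ℝ | ∃ σ, IsCoverAssign I S σ ∧ x = assignValue I σ}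

/-- A tree is feasible if it visits the depot and its cost does not exceed the budget. -/
def IsFeasibleTree (I : BPCCSPInstance V) (T : Finset (Sym2 V)) : Prop :=
  IsTreeSubgraph I.G T ∧ I.depot ∈ edgeVerts T ∧ (∑ e ∈ T, I.len e) ≤ I.budget

/-- A tree is optimal if it is feasible and its collected prize is maximal among all
feasible trees. -/
def IsOptimalTree (I : BPCCSPInstance V) (T : Finset (Sym2 V)) : Prop :=
  IsFeasibleTree I T ∧
    ∀ T' : Finset (Sym2 V), IsFeasibleTree I T' →
      collectedPrize I (edgeVerts T') ≤ collectedPrize I (edgeVerts T)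

/-!
Deleting the edge `{v, w}` from the tree `T` splits it into two subtrees, one containing `v` and
one containing `w`, and `k` lies in one of them, say in that of `v`. Then the edge `{w, k}`
reconnects the two parts into a tree on the same vertex set, so with the same collected prize,
and it costs no more since `ℓ({w, k}) ≤ ℓ({v, w})`.
-/

namespace SimpleGraph

variable {α : Type*}

lemma Walk.reachable_deleteEdges_or {G : SimpleGraph α} {a b u : α} (p : G.Walk u a) :
    (G.deleteEdges {s(a, b)}).Reachable u a ∨ (G.deleteEdges {s(a, b)}).Reachable u b := by
  induction p with
  | nil => exact .inl .rfl
  | @cons u y a huy _ ih =>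
    by_cases he : s(u, y) = s(a, b)
    · rcases Sym2.eq_iff.mp he with ⟨rfl, -⟩ | ⟨rfl, -⟩
      · exact .inl .rfl
      · exact .inr .rfl
    · have hadj : (G.deleteEdges {s(a, b)}).Adj u y := by simp [huy, he]
      exact ih.imp hadj.reachable.trans hadj.reachable.trans

section

variable [DecidableEq α]

lemma fromEdgeSet_coe_erase (T : Finset (Sym2 α)) (e : Sym2 α) :
    fromEdgeSet ↑(T.erase e) = (fromEdgeSet ↑T).deleteEdges {e} := by
  rw [Finset.coe_erase, fromEdgeSet_sdiff, deleteEdges]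

lemma fromEdgeSet_coe_insert (T : Finset (Sym2 α)) (a b : α) :
    fromEdgeSet ↑(insert s(a, b) T) = fromEdgeSet ↑T ⊔ edge a b := by
  rw [Finset.coe_insert, Set.insert_eq, fromEdgeSet_union, sup_comm, edge]

end

end SimpleGraph

namespace Finset

variable {α : Type*} [DecidableEq α]

lemma insert_erase_sdiff_of_mem {s t : Finset α} {x y : α} (hx : x ∈ t) (hy : y ∈ t) :
    insert x (s.erase y) \ t = s \ t := by
  rw [insert_sdiff_of_mem _ hx, erase_sdiff_comm, erase_eq_of_notMem (notMem_sdiff_of_mem_right hy)]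

end Finset

open Finset SimpleGraph

section EdgeSets

variable {T : Finset (Sym2 V)} {a b c : V}

lemma mem_edgeVerts {x : V} : x ∈ edgeVerts T ↔ ∃ e ∈ T, x ∈ e := by
  simp [edgeVerts]

lemma mem_edgeVerts_of_mem (hab : s(a, b) ∈ T) : a ∈ edgeVerts T :=
  mem_edgeVerts.mpr ⟨_, hab, Sym2.mem_mk_left a b⟩

lemma edgeVerts_insert_s3 : edgeVerts (insert s(a, b) T) = insert a (insert b (edgeVerts T)) := by
  ext x
  simp [edgeVerts, or_assoc, eq_comm]

lemma ConnIn.mem_edgeVerts (h : ConnIn T a b) (hab : a ≠ b) : a ∈ edgeVerts T := by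
  obtain ⟨p⟩ := h
  exact mem_edgeVerts_of_mem ((fromEdgeSet_adj _).mp (p.adj_snd (p.not_nil_of_ne hab))).1

lemma ConnIn.eq_or_mem_edgeVerts (h : ConnIn T a b) :
    a = b ∨ a ∈ edgeVerts T ∧ b ∈ edgeVerts T := by
  by_cases hab : a = b
  · exact .inl hab
  · exact .inr ⟨h.mem_edgeVerts hab, ConnIn.mem_edgeVerts h.symm (Ne.symm hab)⟩

lemma edgeVerts_exchange (hab : s(a, b) ∈ T) (hca : ConnIn (T.erase s(a, b)) c a) :
    edgeVerts (insert s(b, c) (T.erase s(a, b))) = edgeVerts T := by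
  conv_rhs => rw [← insert_erase hab]
  rw [edgeVerts_insert_s3, edgeVerts_insert_s3]
  rcases hca.eq_or_mem_edgeVerts with rfl | ⟨hc, ha⟩
  · exact insert_comm _ _ _
  · rw [insert_eq_of_mem hc, insert_eq_of_mem (mem_insert_of_mem ha)]

end EdgeSets

namespace IsTreeSubgraph

variable {G : SimpleGraph V} {T : Finset (Sym2 V)} {a b c u : V}

lemma not_connIn_erase (hT : IsTreeSubgraph G T) (hab : s(a, b) ∈ T) :
    ¬ ConnIn (T.erase s(a, b)) a b := by
  have hedge : s(a, b) ∈ (fromEdgeSet (↑T : Set (Sym2 V))).edgeSet :=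
    (fromEdgeSet_adj _).mpr ⟨hab, (hT.1 hab).ne⟩
  rw [ConnIn, fromEdgeSet_coe_erase]
  exact isAcyclic_iff_forall_isBridge.mp hT.2.2.2 hedge

lemma connIn_erase_or (hT : IsTreeSubgraph G T) (hab : s(a, b) ∈ T) (hu : u ∈ edgeVerts T) :
    ConnIn (T.erase s(a, b)) u a ∨ ConnIn (T.erase s(a, b)) u b := by
  rw [ConnIn, ConnIn, fromEdgeSet_coe_erase]
  exact (hT.2.2.1 u hu a (mem_edgeVerts_of_mem hab)).some.reachable_deleteEdges_or

section Exchange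

variable (hT : IsTreeSubgraph G T) (hab : s(a, b) ∈ T) (hca : ConnIn (T.erase s(a, b)) c a)
include hT hab hca

lemma not_connIn_erase_of_connIn : ¬ ConnIn (T.erase s(a, b)) b c :=
  fun hbc => hT.not_connIn_erase hab (Reachable.trans hbc hca).symm

lemma exchange (hbc : s(b, c) ∈ G.edgeSet) :
    IsTreeSubgraph G (insert s(b, c) (T.erase s(a, b))) := by
  set S := T.erase s(a, b)
  have hST : fromEdgeSet ↑S ≤ fromEdgeSet (↑(insert s(b, c) S) : Set (Sym2 V)) :=
    fromEdgeSet_mono (by simp)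
  have hreach_b : ∀ u ∈ edgeVerts (insert s(b, c) S), ConnIn (insert s(b, c) S) u b := by
    have hab' : ConnIn (insert s(b, c) S) a b :=
      Reachable.trans (hca.mono hST).symm
        ((fromEdgeSet_adj _).mpr ⟨mem_insert_self _ _, (hbc : G.Adj b c).ne⟩).reachable.symm
    intro u hu
    rw [edgeVerts_exchange hab hca] at hu
    rcases hT.connIn_erase_or hab hu with hua | hub
    · exact Reachable.trans (hua.mono hST) hab'
    · exact hub.mono hST
  refine ⟨?_, insert_nonempty _ _, ?_, ?_⟩
  · rw [coe_insert]
    exact Set.insert_subset hbc ((coe_subset.mpr (erase_subset _ _)).trans hT.1)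
  · exact fun u hu w hw => Reachable.trans (hreach_b u hu) (hreach_b w hw).symm
  · rw [fromEdgeSet_coe_insert]
    exact IsAcyclic.sup_edge_of_not_reachable (hT.not_connIn_erase_of_connIn hab hca)
      (hT.2.2.2.anti (fromEdgeSet_mono (coe_subset.mpr (erase_subset _ _))))

lemma edge_notMem_erase_of_connIn (hbc : s(b, c) ∈ G.edgeSet) : s(b, c) ∉ T.erase s(a, b) :=
  fun h => hT.not_connIn_erase_of_connIn hab hca
    ((fromEdgeSet_adj _).mpr ⟨h, (hbc : G.Adj b c).ne⟩).reachable

end Exchange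

end IsTreeSubgraph

lemma IsOptimalTree.exchange {I : BPCCSPInstance V} {T : Finset (Sym2 V)} {a b c : V}
    (hT : IsOptimalTree I T) (hab : s(a, b) ∈ T) (hca : ConnIn (T.erase s(a, b)) c a)
    (hbc : s(b, c) ∈ I.G.edgeSet) (hlen : I.len s(b, c) ≤ I.len s(a, b)) :
    IsOptimalTree I (insert s(b, c) (T.erase s(a, b))) := by
  obtain ⟨⟨htree, hdepot, hcost⟩, hopt⟩ := hT
  have hverts := edgeVerts_exchange hab hca
  refine ⟨⟨htree.exchange hab hca hbc, hverts ▸ hdepot, ?_⟩, hverts ▸ hopt⟩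
  calc ∑ e ∈ insert s(b, c) (T.erase s(a, b)), I.len e
      = I.len s(b, c) + ∑ e ∈ T.erase s(a, b), I.len e :=
        sum_insert (htree.edge_notMem_erase_of_connIn hab hca hbc)
    _ ≤ I.len s(a, b) + ∑ e ∈ T.erase s(a, b), I.len e := by gcongr
    _ = ∑ e ∈ T, I.len e := add_sum_erase _ _ hab
    _ ≤ I.budget := hcost

theorem tree_bpccsp_symmetry_breaking_general
    (I : BPCCSPInstance V) (T : Finset (Sym2 V)) (hT : IsOptimalTree I T)
    (v w k : V) (hvk : v ≠ k) (hwk : w ≠ k)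
    (hkT : k ∈ edgeVerts T)
    (e2 : s(v, k) ∈ I.G.edgeSet) (e3 : s(w, k) ∈ I.G.edgeSet)
    (h1 : I.len s(v, k) ≤ I.len s(v, w)) (h2 : I.len s(w, k) ≤ I.len s(v, w)) :
    s(v, w) ∉ T ∨
      ∃ T' : Finset (Sym2 V), IsOptimalTree I T' ∧ s(v, w) ∉ T' ∧
        T \ {s(v, w), s(v, k), s(w, k)} = T' \ {s(v, w), s(v, k), s(w, k)} := by
  by_cases hvwT : s(v, w) ∈ T
  · right
    rcases hT.1.1.connIn_erase_or hvwT hkT with hkv | hkw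
    · refine ⟨_, hT.exchange hvwT hkv e3 h2, by simp [hvk, hwk], ?_⟩
      exact (insert_erase_sdiff_of_mem (by simp) (by simp)).symm
    · rw [Sym2.eq_swap (a := v) (b := w)] at hvwT hkw h1 ⊢
      refine ⟨_, hT.exchange hvwT hkw e2 h1, by simp [hvk, hwk], ?_⟩
      exact (insert_erase_sdiff_of_mem (by simp) (by simp)).symm
  · exact .inl hvwT

/-- Proposition 1 (tree BPCCSP): if v, w, k are distinct visited vertices of an optimal
tree T forming a triangle in G whose most expensive edge is {v, w}, then either
{v, w} ∉ T or there is another optimal tree T'\'' with {v, w} ∉ T'\'' agreeing with T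
outside the triangle. -/
theorem tree_bpccsp_symmetry_breaking
    (I : BPCCSPInstance V) (T : Finset (Sym2 V)) (hT : IsOptimalTree I T)
    (v w k : V) (hvw : v ≠ w) (hvk : v ≠ k) (hwk : w ≠ k)
    (hvT : v ∈ edgeVerts T) (hwT : w ∈ edgeVerts T) (hkT : k ∈ edgeVerts T)
    (e1 : s(v, w) ∈ I.G.edgeSet) (e2 : s(v, k) ∈ I.G.edgeSet) (e3 : s(w, k) ∈ I.G.edgeSet)
    (h1 : I.len s(v, k) ≤ I.len s(v, w)) (h2 : I.len s(w, k) ≤ I.len s(v, w)) :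
    s(v, w) ∉ T ∨
      ∃ T' : Finset (Sym2 V), IsOptimalTree I T' ∧ s(v, w) ∉ T' ∧
        T \ {s(v, w), s(v, k), s(w, k)} = T' \ {s(v, w), s(v, k), s(w, k)} :=
  tree_bpccsp_symmetry_breaking_general I T hT v w k hvk hwk hkT e2 e3 h1 h2
end
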